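/- arXiv:1610.01335 — 2 statements merged into one kernel-verified Lean document; each statement's English description precedes it below -/
import Mathlib

section
/- Let N ≤ Perm(X) be a regular subgroup and let N' = Cent_{Perm(X)}(N) be its centralizer in Perm(X). Then f : X → E generates Map(X,E) as an E[N]-module if and only if f generates Map(X,E) as an E[N']-module. (Theorem 1.1 in the model M = Map(X,E).) -/
/-- The action of the group algebra `E[N]` of a subgroup `N ≤ Perm X` on `Map(X, E)`:
`(η • f)(y) = f(η⁻¹ y)`, extended `E`-linearly. -/
noncomputable def permAct {X E : Type*} [Field E] (N : Subgroup (Equiv.Perm X))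
    (z : MonoidAlgebra E ↥N) (f : X → E) : X → E :=
  fun y => Finsupp.sum z.coeff fun η c => c * f ((η : Equiv.Perm X)⁻¹ y)

/-!
The orbit map `η ↦ η x₀` identifies the regular subgroup `N` with `X`, hence `Map(X, E)` with
functions `F : N → E`. Under this identification `N` acts by left translations, and the
centralizer of `N` consists exactly of the right translations. So `f` generates for `N`
(resp. for its centralizer) iff the rows (resp. the columns) of the square matrix
`(F (g * h))_{g,h}` span `E^N`, and both conditions say that this matrix is invertible.
-/

open Submodule

theorem Matrix.span_range_row_eq_top_iff_isUnit {n R : Type*} [Fintype n] [DecidableEq n]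
    [CommRing R] (M : Matrix n n R) : span R (Set.range M.row) = ⊤ ↔ IsUnit M := by
  rw [← range_vecMulLinear, LinearMap.range_eq_top, ← vecMul_surjective_iff_isUnit]
  rfl

theorem Submodule.span_range_linearEquiv_comp_eq_top_iff {R M M₂ ι : Type*} [Semiring R]
    [AddCommMonoid M] [AddCommMonoid M₂] [Module R M] [Module R M₂] (e : M ≃ₗ[R] M₂)
    (v : ι → M) : span R (Set.range (e ∘ v)) = ⊤ ↔ span R (Set.range v) = ⊤ := by
  rw [Set.range_comp, span_image_linearEquiv, Submodule.map_eq_top_iff]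

theorem span_range_leftTranslates_eq_top_iff_rightTranslates {G R : Type*} [Group G] [Finite G]
    [CommRing R] (F : G → R) :
    span R (Set.range fun g h => F (g * h)) = ⊤ ↔
      span R (Set.range fun g h => F (h * g)) = ⊤ := by
  classical
  have := Fintype.ofFinite G
  let M : Matrix G G R := Matrix.of fun g h => F (g * h)
  exact M.span_range_row_eq_top_iff_isUnit.trans
    (M.isUnit_transpose.symm.trans M.transpose.span_range_row_eq_top_iff_isUnit.symm)

theorem permAct_eq_linearCombination {X E : Type*} [Field E] (H : Subgroup (Equiv.Perm X))
    (z : MonoidAlgebra E H) (f : X → E) :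
    permAct H z f =
      Finsupp.linearCombination E (fun η : H => f ∘ ⇑(η⁻¹ : Equiv.Perm X)) z.coeff := by
  ext y
  simp only [permAct, Finsupp.linearCombination_apply, Finsupp.sum, Finset.sum_apply]
  rfl

theorem permAct_surjective_iff_span_range_eq_top {X E : Type*} [Field E]
    (H : Subgroup (Equiv.Perm X)) (f : X → E) :
    (∀ m, ∃ z : MonoidAlgebra E H, permAct H z f = m) ↔
      span E (Set.range fun η : H => f ∘ ⇑(η : Equiv.Perm X)) = ⊤ := by
  have hrange : (Set.range fun η : H => f ∘ ⇑(η : Equiv.Perm X)) =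
      Set.range fun η : H => f ∘ ⇑(η⁻¹ : Equiv.Perm X) :=
    (inv_surjective.range_comp (fun η : H => f ∘ ⇑(η : Equiv.Perm X))).symm
  rw [hrange, ← Finsupp.range_linearCombination, LinearMap.range_eq_top]
  simp only [permAct_eq_linearCombination, MonoidAlgebra.exists]
  rfl

theorem Subgroup.bijective_apply_of_card_eq {X : Type*} [Finite X] {N : Subgroup (Equiv.Perm X)}
    {x₀ : X} (htrans : ∀ y, ∃ η ∈ N, η x₀ = y) (hcard : Nat.card N = Nat.card X) :
    Function.Bijective fun η : N => (η : Equiv.Perm X) x₀ := by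
  refine (Nat.bijective_iff_surjective_and_card _).2 ⟨fun y => ?_, hcard⟩
  obtain ⟨η, hη, rfl⟩ := htrans y
  exact ⟨⟨η, hη⟩, rfl⟩

section Regular

variable {X : Type*} {N : Subgroup (Equiv.Perm X)} {x₀ : X}
  (hN : Function.Bijective fun η : N => (η : Equiv.Perm X) x₀)

noncomputable def regularEquiv : N ≃ X := Equiv.ofBijective _ hN

noncomputable def rightMulPerm (σ : N) : Equiv.Perm X :=
  ((regularEquiv hN).symm.trans (Equiv.mulRight σ)).trans (regularEquiv hN)

theorem rightMulPerm_apply (σ τ : N) :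
    rightMulPerm hN σ ((τ : Equiv.Perm X) x₀) = ((τ * σ : N) : Equiv.Perm X) x₀ := by
  simp only [rightMulPerm, Equiv.trans_apply, Equiv.coe_mulRight]
  rw [regularEquiv, Equiv.ofBijective_symm_apply_apply]
  rfl

theorem centralizer_eq_range_rightMulPerm :
    (Subgroup.centralizer (N : Set (Equiv.Perm X)) : Set (Equiv.Perm X)) =
      Set.range (rightMulPerm hN) := by
  ext π
  simp only [SetLike.mem_coe, Subgroup.mem_centralizer_iff, Set.mem_range]
  constructor
  · intro hπ
    obtain ⟨σ, hσ : (σ : Equiv.Perm X) x₀ = π x₀⟩ := hN.2 (π x₀)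
    refine ⟨σ, Equiv.ext fun y => ?_⟩
    obtain ⟨τ, rfl⟩ := hN.2 y
    change _ = π ((τ : Equiv.Perm X) x₀)
    rw [rightMulPerm_apply, Subgroup.coe_mul, Equiv.Perm.mul_apply, hσ, ← Equiv.Perm.mul_apply,
      hπ τ τ.2, Equiv.Perm.mul_apply]
  · rintro ⟨σ, rfl⟩ η hη
    refine Equiv.ext fun y => ?_
    obtain ⟨τ, rfl⟩ := hN.2 y
    change η (rightMulPerm hN σ _) =
      rightMulPerm hN σ (((⟨η, hη⟩ * τ : N) : Equiv.Perm X) x₀)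
    rw [rightMulPerm_apply, rightMulPerm_apply, mul_assoc]
    rfl

variable {E : Type*} [Field E]

theorem span_range_comp_eq_top_iff_leftTranslates (f : X → E) :
    span E (Set.range fun η : N => f ∘ ⇑(η : Equiv.Perm X)) = ⊤ ↔
      span E (Set.range fun g h : N => f (regularEquiv hN (g * h))) = ⊤ :=
  (span_range_linearEquiv_comp_eq_top_iff
    (LinearEquiv.funCongrLeft E E (regularEquiv hN)) _).symm

theorem span_range_centralizer_comp_eq_top_iff_rightTranslates (f : X → E) :
    span E (Set.range fun π : Subgroup.centralizer (N : Set (Equiv.Perm X)) =>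
        f ∘ ⇑(π : Equiv.Perm X)) = ⊤ ↔
      span E (Set.range fun g h : N => f (regularEquiv hN (h * g))) = ⊤ := by
  have hrange : (Set.range fun π : Subgroup.centralizer (N : Set (Equiv.Perm X)) =>
      f ∘ ⇑(π : Equiv.Perm X)) = Set.range fun σ => f ∘ rightMulPerm hN σ := by
    rw [Set.range_comp' (fun π : Equiv.Perm X => f ∘ π) Subtype.val, Subtype.range_coe,
      centralizer_eq_range_rightMulPerm hN, ← Set.range_comp]
    rfl
  rw [hrange, ← span_range_linearEquiv_comp_eq_top_iff
    (LinearEquiv.funCongrLeft E E (regularEquiv hN))]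
  congr! with g h
  exact congrArg f (rightMulPerm_apply hN g h)

end Regular

/-- Theorem 1.1 in the model `M = Map(X, E)`: for a regular subgroup `N ≤ Perm X` with
centralizer `N'`, a function `f : X → E` generates `Map(X, E)` as an `E[N]`-module if and
only if it generates `Map(X, E)` as an `E[N']`-module. -/
theorem generator_iff_generator_centralizer
    {X E : Type*} [Fintype X] [Nonempty X] [Field E]
    (N : Subgroup (Equiv.Perm X))
    (htrans : ∀ y z : X, ∃ η ∈ N, η y = z)
    (hcard : Nat.card N = Nat.card X)
    (f : X → E) :
    (∀ m : X → E, ∃ z : MonoidAlgebra E ↥N, permAct N z f = m) ↔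
      (∀ m : X → E, ∃ z' : MonoidAlgebra E ↥(Subgroup.centralizer (N : Set (Equiv.Perm X))),
        permAct (Subgroup.centralizer (N : Set (Equiv.Perm X))) z' f = m) := by
  obtain ⟨x₀⟩ := ‹Nonempty X›
  have hN := Subgroup.bijective_apply_of_card_eq (htrans x₀) hcard
  rw [permAct_surjective_iff_span_range_eq_top, permAct_surjective_iff_span_range_eq_top,
    span_range_comp_eq_top_iff_leftTranslates hN,
    span_range_centralizer_comp_eq_top_iff_rightTranslates hN]
  exact span_range_leftTranslates_eq_top_iff_rightTranslates (f ∘ regularEquiv hN)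
end

section
/- Let N₁, N₂ ≤ Perm(X) be regular subgroups, and suppose the actions of the group algebras E[N₁] and E[N₂] on Map(X,E) commute: z₁ • (z₂ • f) = z₂ • (z₁ • f) for all z₁ ∈ E[N₁], z₂ ∈ E[N₂], and f : X → E. Then N₂ = Cent_{Perm(X)}(N₁), the centralizer of N₁ in Perm(X). (Proposition 2.5: if two Hopf–Galois structures have commuting actions, then N₂ = N₁'.) -/
/-!
Applied to group elements `g ∈ N₁`, `σ ∈ N₂`, commuting actions give `f ∘ (σ⁻¹ g⁻¹) = f ∘ (g⁻¹ σ⁻¹)`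
for every `f : X → E`; since such functions separate points, `N₂` centralizes `N₁`.
Conversely, an element of the centralizer of the transitive group `N₁` is determined by the image of a single point (if `σ x₀ = τ x₀` then
`σ (η x₀) = η (σ x₀) = η (τ x₀) = τ (η x₀)`), so the centralizer has at most `|X| = |N₂|` elements.
-/

theorem permAct_single {X E : Type*} [Field E] (N : Subgroup (Equiv.Perm X)) (η : N)
    (f : X → E) : permAct N (MonoidAlgebra.single η 1) f = f ∘ ⇑(η⁻¹ : Equiv.Perm X) := by
  funext y
  simp [permAct, MonoidAlgebra.coeff_single, Finsupp.sum_single_index]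

theorem eq_of_forall_comp_eq {X Y E : Type*} [Nontrivial E] {g h : Y → X}
    (H : ∀ f : X → E, f ∘ g = f ∘ h) : g = h := by
  classical
  funext y
  by_contra hne
  obtain ⟨a, b, hab⟩ := exists_pair_ne E
  have := congrFun (H fun x => if x = g y then a else b) y
  simp only [Function.comp_apply, if_neg (Ne.symm hne)] at this
  exact hab this

theorem le_centralizer_of_permAct_comm {X E : Type*} [Field E]
    (N₁ N₂ : Subgroup (Equiv.Perm X))
    (hcomm : ∀ (z₁ : MonoidAlgebra E N₁) (z₂ : MonoidAlgebra E N₂) (f : X → E),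
      permAct N₁ z₁ (permAct N₂ z₂ f) = permAct N₂ z₂ (permAct N₁ z₁ f)) :
    N₂ ≤ Subgroup.centralizer (N₁ : Set (Equiv.Perm X)) := by
  intro σ hσ
  rw [Subgroup.mem_centralizer_iff]
  intro g hg
  have hinv : ⇑(σ⁻¹ * g⁻¹) = ⇑(g⁻¹ * σ⁻¹) := eq_of_forall_comp_eq (E := E) fun f => by
    have := hcomm (MonoidAlgebra.single ⟨g, hg⟩ 1) (MonoidAlgebra.single ⟨σ, hσ⟩ 1) f
    simp only [permAct_single] at this
    simpa only [Equiv.Perm.coe_mul, Function.comp_assoc] using this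
  rw [← mul_inv_rev, ← mul_inv_rev] at hinv
  exact inv_injective (DFunLike.coe_injective hinv)

theorem centralizer_apply_injective_of_transitive {X : Type*} (N : Subgroup (Equiv.Perm X))
    (htrans : ∀ y z : X, ∃ η ∈ N, η y = z) (x₀ : X) :
    Function.Injective fun σ : Subgroup.centralizer (N : Set (Equiv.Perm X)) => σ.1 x₀ := by
  rintro ⟨σ, hσ⟩ ⟨τ, hτ⟩ (h : σ x₀ = τ x₀)
  rw [Subgroup.mem_centralizer_iff] at hσ hτ
  ext y
  obtain ⟨η, hη, rfl⟩ := htrans x₀ y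
  calc σ (η x₀) = η (σ x₀) := congrFun (congrArg DFunLike.coe (hσ η hη)).symm x₀
    _ = η (τ x₀) := by rw [h]
    _ = τ (η x₀) := congrFun (congrArg DFunLike.coe (hτ η hη)) x₀

theorem commuting_algebra_actions_centralizer_general
    {X E : Type*} [Fintype X] [Nonempty X] [Field E]
    (N₁ N₂ : Subgroup (Equiv.Perm X))
    (htrans₁ : ∀ y z : X, ∃ η ∈ N₁, η y = z)
    (hcard₂ : Nat.card N₂ = Nat.card X)
    (hcomm : ∀ (z₁ : MonoidAlgebra E ↥N₁) (z₂ : MonoidAlgebra E ↥N₂) (f : X → E),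
      permAct N₁ z₁ (permAct N₂ z₂ f) = permAct N₂ z₂ (permAct N₁ z₁ f)) :
    N₂ = Subgroup.centralizer (N₁ : Set (Equiv.Perm X)) := by
  have hcard : Nat.card (Subgroup.centralizer (N₁ : Set (Equiv.Perm X))) ≤ Nat.card N₂ :=
    hcard₂ ▸ Nat.card_le_card_of_injective _
      (centralizer_apply_injective_of_transitive N₁ htrans₁ (Classical.arbitrary X))
  exact Subgroup.eq_of_le_of_card_ge (le_centralizer_of_permAct_comm N₁ N₂ hcomm) hcard

/-- Proposition 2.5: if `N₁`, `N₂` are regular subgroups of `Perm X` (`X` finite nonempty) and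
the actions of the group algebras `E[N₁]`, `E[N₂]` on `Map(X, E)` commute, then
`N₂ = Cent_{Perm X}(N₁)`. -/
theorem commuting_algebra_actions_centralizer
    {X E : Type*} [Fintype X] [Nonempty X] [Field E]
    (N₁ N₂ : Subgroup (Equiv.Perm X))
    (htrans₁ : ∀ y z : X, ∃ η ∈ N₁, η y = z)
    (hcard₁ : Nat.card N₁ = Nat.card X)
    (htrans₂ : ∀ y z : X, ∃ η ∈ N₂, η y = z)
    (hcard₂ : Nat.card N₂ = Nat.card X)
    (hcomm : ∀ (z₁ : MonoidAlgebra E ↥N₁) (z₂ : MonoidAlgebra E ↥N₂) (f : X → E),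
      permAct N₁ z₁ (permAct N₂ z₂ f) = permAct N₂ z₂ (permAct N₁ z₁ f)) :
    N₂ = Subgroup.centralizer (N₁ : Set (Equiv.Perm X)) :=
  commuting_algebra_actions_centralizer_general N₁ N₂ htrans₁ hcard₂ hcomm
end
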